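/- Let Ω be a set, Ω* the free monoid on Ω, H ⊆ Ω*×Ω* a finite symmetric set, ρ = ⟨H⟩, and a ∈ Ω*. Set K = max{|p| : (p,q) ∈ H}, K' = max(K, |a|) + 1, L = 2|H| + 2, and N = K'L. Then the right congruence r(aρ) = {(u,v) ∈ Ω*×Ω* : (au, av) ∈ ρ} is generated (as a right congruence on Ω*) by the finite set X = {(u,v) : |u| + |v| ≤ 3N and (au, av) ∈ ρ}. In particular, r(aρ) is a finitely generated right congruence. -/

import Mathlib

/-- A right congruence on a monoid `S`: an equivalence relation compatible with
right multiplication. -/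
def IsRightCong {S : Type*} [Monoid S] (ρ : Set (S × S)) : Prop :=
  Equivalence (fun a b : S => (a, b) ∈ ρ) ∧ ∀ u v t : S, (u, v) ∈ ρ → (u * t, v * t) ∈ ρ

/-- The right congruence generated by a set `H` of pairs: the smallest right
congruence containing `H`. -/
def rcGen {S : Type*} [Monoid S] (H : Set (S × S)) : Set (S × S) :=
  ⋂₀ {ρ : Set (S × S) | IsRightCong ρ ∧ H ⊆ ρ}

/-!
For symmetric `H`, `⟨H⟩` is the reflexive-transitive closure of the rewriting steps
`p * t ⟶ q * t` with `(p, q) ∈ H`. Let `(u, v) ∈ r(aρ)` with `|u| + |v| > 2N` and `|v| ≤ |u|`,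
and watch a derivation `a * u ⟶* a * v` at the `L - 1` positions `|u| - N + r K'`
(`1 ≤ r < L`), counted from the right. If the suffix of `a * u` cut off at one of them is never
touched, it is longer than `a`, so `u` and `v` share a nonempty suffix and `(u, v)` comes from a
shorter pair. Otherwise a rule of `H` rewrites across each position; by pigeonhole
(`L - 1 > |H|`) one rule `(p, q)` does so at two positions at least `K'` apart. Cutting
`u = x * t = x' * t'` there, `a * x` and `a * x'` both rewrite to `p`, so `(x, x')` is a pair of
`r(aρ)` of length `< 2N`, and `(x' * t, v)` is a shorter pair of `r(aρ)`. Induction on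
`|u| + |v|` gives the first claim.

Let `A` be the finite set of letters of `a` and of `H`. A letter outside `A` is never touched by
a rewriting, so if it occurs in `u` it occurs in `v` at the same distance from the end and can be
cancelled; hence the short pairs over `A`, of which there are finitely many, already generate.
-/

section RightCong

variable {S : Type*} [Monoid S]

theorem isRightCong_rcGen (H : Set (S × S)) : IsRightCong (rcGen H) :=
  ⟨⟨fun x _ hρ => hρ.1.1.refl x, fun hxy _ hρ => hρ.1.1.symm (hxy _ hρ),
    fun hxy hyz _ hρ => hρ.1.1.trans (hxy _ hρ) (hyz _ hρ)⟩,
    fun u v t huv _ hρ => hρ.1.2 u v t (huv _ hρ)⟩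

theorem subset_rcGen (H : Set (S × S)) : H ⊆ rcGen H :=
  fun _ hx _ hρ => hρ.2 hx

theorem rcGen_subset {H ρ : Set (S × S)} (hρ : IsRightCong ρ) (hH : H ⊆ ρ) : rcGen H ⊆ ρ :=
  Set.sInter_subset_of_mem ⟨hρ, hH⟩

theorem rcGen_subset_rcGen {H H' : Set (S × S)} (h : H ⊆ rcGen H') : rcGen H ⊆ rcGen H' :=
  rcGen_subset (isRightCong_rcGen H') h

/-- The right annihilator congruence `r(aρ)`. -/
def annihilator (ρ : Set (S × S)) (a : S) : Set (S × S) :=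
  {p | (a * p.1, a * p.2) ∈ ρ}

theorem isRightCong_annihilator {ρ : Set (S × S)} (hρ : IsRightCong ρ) (a : S) :
    IsRightCong (annihilator ρ a) :=
  ⟨⟨fun _ => hρ.1.refl _, hρ.1.symm, hρ.1.trans⟩, fun u v t h => by
    simpa only [annihilator, Set.mem_ofPred_eq, mul_assoc] using hρ.2 _ _ t h⟩

def RewriteStep (H : Set (S × S)) (w w' : S) : Prop :=
  ∃ p q t, (p, q) ∈ H ∧ w = p * t ∧ w' = q * t

def Rewrites (H : Set (S × S)) : S → S → Prop :=
  Relation.ReflTransGen (RewriteStep H)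

variable {H : Set (S × S)}

theorem RewriteStep.mul_right {w w' : S} (h : RewriteStep H w w') (t : S) :
    RewriteStep H (w * t) (w' * t) := by
  obtain ⟨p, q, s, hpq, rfl, rfl⟩ := h
  exact ⟨p, q, s * t, hpq, mul_assoc .., mul_assoc ..⟩

theorem Rewrites.mul_right {w w' : S} (h : Rewrites H w w') (t : S) :
    Rewrites H (w * t) (w' * t) :=
  Relation.ReflTransGen.lift (· * t) (fun _ _ hs => RewriteStep.mul_right hs t) _ _ h

theorem Rewrites.symm (hsym : ∀ p ∈ H, (p.2, p.1) ∈ H) {w w' : S} (h : Rewrites H w w') :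
    Rewrites H w' w :=
  have : Std.Symm (RewriteStep H) := ⟨fun _ _ ⟨p, q, t, hpq, h₁, h₂⟩ =>
    ⟨q, p, t, hsym _ hpq, h₂, h₁⟩⟩
  Relation.ReflTransGen.stdSymm.symm _ _ h

theorem rcGen_eq_rewrites (hsym : ∀ p ∈ H, (p.2, p.1) ∈ H) :
    rcGen H = {p | Rewrites H p.1 p.2} := by
  refine subset_antisymm (rcGen_subset ?_ ?_) ?_
  · exact ⟨⟨fun _ => .refl, Rewrites.symm hsym, .trans⟩, fun _ _ t h => h.mul_right t⟩
  · exact fun ⟨p, q⟩ hpq => .single ⟨p, q, 1, hpq, (mul_one p).symm, (mul_one q).symm⟩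
  · rintro ⟨w, w'⟩ (h : Rewrites H w w')
    have hρ := isRightCong_rcGen H
    induction h with
    | refl => exact hρ.1.refl w
    | tail _ hstep ih =>
      obtain ⟨p, q, t, hpq, rfl, rfl⟩ := hstep
      exact hρ.1.trans ih (hρ.2 p q t (subset_rcGen H hpq))

end RightCong

theorem Set.exists_lt_and_of_ncard_lt {ι α : Type*} [LinearOrder ι] {s : Set ι} {t : Set α}
    (ht : t.Finite) (hst : t.ncard < s.ncard) {P : ι → α → Prop}
    (h : ∀ i ∈ s, ∃ x ∈ t, P i x) : ∃ i ∈ s, ∃ j ∈ s, i < j ∧ ∃ x, P i x ∧ P j x := by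
  obtain ⟨i₀, hi₀⟩ := Set.nonempty_of_ncard_ne_zero (by omega : s.ncard ≠ 0)
  obtain ⟨x₀, -⟩ := h i₀ hi₀
  have : Nonempty α := ⟨x₀⟩
  choose! f hft hP using h
  obtain ⟨i, hi, j, hj, hij, hfij⟩ := Set.exists_ne_map_eq_of_ncard_lt_of_maps_to hst hft ht
  rcases hij.lt_or_gt with hij | hij
  · exact ⟨i, hi, j, hj, hij, f i, hP i hi, hfij ▸ hP j hj⟩
  · exact ⟨j, hj, i, hi, hij, f i, hfij ▸ hP j hj, hP i hi⟩

namespace FreeMonoid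

variable {Ω : Type*}

theorem exists_eq_mul_of_le_length (w : FreeMonoid Ω) {n : ℕ} (hn : n ≤ w.length) :
    ∃ y s : FreeMonoid Ω, w = y * s ∧ s.length = n := by
  refine ⟨ofList (w.toList.take (w.length - n)), ofList (w.toList.drop (w.length - n)), ?_, ?_⟩
  · rw [← ofList_append, List.take_append_drop, ofList_toList]
  · change (w.toList.drop _).length = n
    rw [List.length_drop]
    change w.length - (w.length - n) = n
    omega

theorem exists_of_mul_eq_mul_of_length_le {y s p t : FreeMonoid Ω} (h : y * s = p * t)
    (hst : s.length ≤ t.length) : ∃ t₀, t = t₀ * s ∧ y = p * t₀ := by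
  rcases List.append_eq_append_iff.1 (congrArg toList h) with ⟨d, hp, hs⟩ | ⟨d, hy, ht⟩
  · have hlen : s.length = d.length + t.length :=
      (congrArg List.length hs).trans (List.length_append ..)
    obtain rfl : d = [] := List.eq_nil_of_length_eq_zero (by omega)
    exact ⟨1, toList.injective (by simpa using hs.symm), toList.injective (by simpa using hp.symm)⟩
  · exact ⟨ofList d, ht, hy⟩

theorem mul_inj_of_length_eq {y s p t : FreeMonoid Ω} (h : y * s = p * t)
    (hst : s.length = t.length) : y = p ∧ s = t :=
  List.append_inj' (congrArg toList h) hst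

theorem exists_of_mul_eq_mul_of_notMem {p t y s : FreeMonoid Ω} {c : Ω}
    (h : p * t = y * (of c * s)) (hc : c ∉ p) : ∃ t₀, t = t₀ * (of c * s) ∧ y = p * t₀ := by
  rcases List.append_eq_append_iff.1 (congrArg toList h) with ⟨d, hy, ht⟩ | ⟨d, hp, hs⟩
  · exact ⟨ofList d, ht, hy⟩
  · cases d with
    | nil =>
      exact ⟨1, toList.injective (by simpa using hs.symm),
        toList.injective (by simpa using hp.symm)⟩
    | cons x d =>
      obtain ⟨rfl, -⟩ := List.cons_eq_cons.1 hs
      exact absurd (by simp [hp] : c ∈ toList p) hc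

theorem exists_first_notMem {A : Set Ω} {w : FreeMonoid Ω} (h : ∃ c ∈ w, c ∉ A) :
    ∃ w₀ c w₁, w = w₀ * (of c * w₁) ∧ (∀ x ∈ w₀, x ∈ A) ∧ c ∉ A := by
  classical
  obtain ⟨c, hc⟩ := Option.isSome_iff_exists.1
    (List.find?_isSome (p := fun c => decide (c ∉ A)) |>.2
      (by obtain ⟨c, hc, hcA⟩ := h; exact ⟨c, hc, by simpa using hcA⟩))
  obtain ⟨hcA, w₀, w₁, hw, hw₀⟩ := List.find?_eq_some_iff_append.1 hc
  exact ⟨ofList w₀, c, ofList w₁, hw, fun x hx => by simpa using hw₀ x hx, by simpa using hcA⟩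

theorem finite_setOf_length_le {A : Set Ω} (hA : A.Finite) (n : ℕ) :
    {w : FreeMonoid Ω | w.length ≤ n ∧ ∀ c ∈ w, c ∈ A}.Finite := by
  have : Finite A := hA.to_subtype
  refine ((List.finite_length_le A n).image fun l => ofList (l.map Subtype.val)).subset ?_
  rintro w ⟨hn, hw⟩
  lift w.toList to List A using hw with l hl
  refine ⟨l, ?_, congrArg ofList hl⟩
  change l.length ≤ n
  rw [← List.length_map Subtype.val, hl]
  exact hn

theorem exists_common_suffix {a u v y z s : FreeMonoid Ω} (hu : a * u = y * s)
    (hv : a * v = z * s) (ha : a.length < s.length) :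
    ∃ u₁ v₁ s₀ s₁, u = u₁ * s₁ ∧ v = v₁ * s₁ ∧ s₁ ≠ 1 ∧ a * u₁ = y * s₀ ∧ a * v₁ = z * s₀ := by
  have hul := congrArg length hu
  have hvl := congrArg length hv
  simp only [length_mul] at hul hvl
  set ℓ := min s.length (min u.length v.length)
  have hℓ₁ : 1 ≤ ℓ := by omega
  obtain ⟨s₀, s₁, rfl, hs₁⟩ := s.exists_eq_mul_of_le_length (min_le_left _ _ : ℓ ≤ _)
  obtain ⟨u₁, su, rfl, hsu⟩ := u.exists_eq_mul_of_le_length (by omega : ℓ ≤ _)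
  obtain ⟨v₁, sv, rfl, hsv⟩ := v.exists_eq_mul_of_le_length (by omega : ℓ ≤ _)
  rw [← mul_assoc, ← mul_assoc] at hu hv
  obtain ⟨hu₁, rfl⟩ := mul_inj_of_length_eq hu (hsu.trans hs₁.symm)
  obtain ⟨hv₁, rfl⟩ := mul_inj_of_length_eq hv (hsv.trans hsu.symm)
  refine ⟨u₁, v₁, s₀, _, rfl, rfl, fun h => ?_, hu₁, hv₁⟩
  rw [h, length_one] at hsv
  omega

end FreeMonoid

section FreeRewriting

open FreeMonoid

variable {Ω : Type*} {H : Set (FreeMonoid Ω × FreeMonoid Ω)}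

variable (H) in
/-- `w` rewrites to `w'` through a step `p * t ⟶ q * t` in which the occurrence of `p` covers
the `n`-th letter of `w` from the right. -/
def RewritesAcross (n : ℕ) (pq : FreeMonoid Ω × FreeMonoid Ω) (w w' : FreeMonoid Ω) : Prop :=
  pq ∈ H ∧ ∃ y t, w = y * t ∧ t.length < n ∧ n ≤ t.length + pq.1.length ∧
    Rewrites H y pq.1 ∧ Rewrites H (pq.2 * t) w'

theorem Rewrites.suffix_or_rewritesAcross {w w' : FreeMonoid Ω} (h : Rewrites H w w') {n : ℕ}
    (hn : n ≤ w.length) :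
    (∃ y z s, s.length = n ∧ w = y * s ∧ w' = z * s ∧ Rewrites H y z) ∨
    ∃ pq, RewritesAcross H n pq w w' := by
  induction h using Relation.ReflTransGen.head_induction_on with
  | refl =>
    obtain ⟨y, s, rfl, hs⟩ := w'.exists_eq_mul_of_le_length hn
    exact .inl ⟨y, y, s, hs, rfl, rfl, .refl⟩
  | head hstep htail ih =>
    obtain ⟨p, q, t, hpq, rfl, rfl⟩ := hstep
    rw [length_mul] at hn
    by_cases hnt : n ≤ t.length
    · rcases ih (by rw [length_mul]; omega) with
          ⟨y, z, s, hs, hy, rfl, hyz⟩ | ⟨pq', hpq', y, t', hy, ht', hp', hyp, hq'⟩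
      · obtain ⟨t₀, rfl, rfl⟩ := exists_of_mul_eq_mul_of_length_le hy.symm (by omega)
        exact .inl ⟨p * t₀, z, s, hs, (mul_assoc ..).symm, rfl,
          .head ⟨p, q, t₀, hpq, rfl, rfl⟩ hyz⟩
      · obtain ⟨d, rfl, rfl⟩ := exists_of_mul_eq_mul_of_length_le hy.symm (by omega)
        exact .inr ⟨pq', hpq', p * d, t', (mul_assoc ..).symm, ht', hp',
          .head ⟨p, q, d, hpq, rfl, rfl⟩ hyp, hq'⟩
    · exact .inr ⟨(p, q), hpq, p, t, rfl, by omega, (by omega : n ≤ t.length + p.length),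
        .refl, htail⟩

theorem Rewrites.exists_of_eq_mul_of_notMem {A : Set Ω}
    (hA : ∀ p ∈ H, (∀ c ∈ p.1, c ∈ A) ∧ ∀ c ∈ p.2, c ∈ A) {w w' : FreeMonoid Ω}
    (h : Rewrites H w w') {y s : FreeMonoid Ω} {c : Ω} (hw : w = y * (of c * s))
    (hy : ∀ x ∈ y, x ∈ A) (hc : c ∉ A) :
    ∃ z, w' = z * (of c * s) ∧ (∀ x ∈ z, x ∈ A) ∧ Rewrites H y z := by
  induction h using Relation.ReflTransGen.head_induction_on generalizing y with
  | refl => exact ⟨y, hw, hy, .refl⟩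
  | head hstep _ ih =>
    obtain ⟨p, q, t, hpq, rfl, rfl⟩ := hstep
    obtain ⟨t₀, rfl, rfl⟩ := exists_of_mul_eq_mul_of_notMem hw fun hcp => hc ((hA _ hpq).1 c hcp)
    have hqt₀ : ∀ x ∈ q * t₀, x ∈ A := fun x hx =>
      (mem_mul.1 hx).elim ((hA _ hpq).2 x) fun hx => hy x (mem_mul.2 (.inr hx))
    obtain ⟨z, hz, hzA, hyz⟩ := ih (mul_assoc ..).symm hqt₀
    exact ⟨z, hz, hzA, .head ⟨p, q, t₀, hpq, rfl, rfl⟩ hyz⟩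

end FreeRewriting

section Annihilator

open FreeMonoid

variable {Ω : Type*} {H : Set (FreeMonoid Ω × FreeMonoid Ω)} {a : FreeMonoid Ω} {K' : ℕ}

theorem exists_shorter_of_rewritesAcross (hsym : ∀ p ∈ H, (p.2, p.1) ∈ H)
    {pq : FreeMonoid Ω × FreeMonoid Ω} (hp : pq.1.length < K') {u v : FreeMonoid Ω}
    {ℓ₁ ℓ₂ : ℕ} (h₁ : RewritesAcross H ℓ₁ pq (a * u) (a * v))
    (h₂ : RewritesAcross H ℓ₂ pq (a * u) (a * v)) (hℓ : ℓ₁ + K' ≤ ℓ₂) (hℓ₂ : ℓ₂ ≤ u.length) :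
    ∃ x x' t, u = x * t ∧ x'.length < x.length ∧ x.length + ℓ₁ < u.length + K' ∧
      Rewrites H (a * x) (a * x') ∧ Rewrites H (a * (x' * t)) (a * v) := by
  obtain ⟨hpq, y₁, t₁, hu₁, ht₁, hp₁, hy₁, hq₁⟩ := h₁
  obtain ⟨-, y₂, t₂, hu₂, ht₂, hp₂, hy₂, -⟩ := h₂
  obtain ⟨x₁, hx₁, rfl⟩ := exists_of_mul_eq_mul_of_length_le hu₁.symm (by omega)
  obtain ⟨x₂, hx₂, rfl⟩ := exists_of_mul_eq_mul_of_length_le hu₂.symm (by omega)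
  have hl₁ := congrArg length hx₁
  have hl₂ := congrArg length hx₂
  rw [length_mul] at hl₁ hl₂
  refine ⟨x₁, x₂, t₁, hx₁, by omega, by omega, hy₁.trans (hy₂.symm hsym), ?_⟩
  rw [← mul_assoc]
  exact (hy₂.mul_right t₁).trans (.head ⟨pq.1, pq.2, t₁, hpq, rfl, rfl⟩ hq₁)

theorem exists_common_suffix_or_shorter (hsym : ∀ p ∈ H, (p.2, p.1) ∈ H) (hfin : H.Finite)
    (hH : ∀ p ∈ H, p.1.length < K') (ha : a.length < K') {L : ℕ} (hL : H.ncard + 2 ≤ L)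
    {u v : FreeMonoid Ω} (huv : Rewrites H (a * u) (a * v)) (hu : K' * L ≤ u.length) :
    (∃ u₁ v₁ s, u = u₁ * s ∧ v = v₁ * s ∧ s ≠ 1 ∧ Rewrites H (a * u₁) (a * v₁)) ∨
    ∃ x x' t, u = x * t ∧ x'.length < x.length ∧ x.length < K' * L ∧
      Rewrites H (a * x) (a * x') ∧ Rewrites H (a * (x' * t)) (a * v) := by
  set m := u.length - K' * L
  have hlevel : ∀ r ∈ Set.Icc 1 (L - 1), K' ≤ r * K' ∧ r * K' + K' ≤ K' * L := by
    rintro r ⟨hr₁, hr₂⟩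
    exact ⟨Nat.le_mul_of_pos_left _ hr₁, by
      have := Nat.mul_le_mul_right K' (by omega : r + 1 ≤ L); linarith⟩
  by_cases hsurv : ∃ r ∈ Set.Icc 1 (L - 1), ∃ y z s, s.length = m + r * K' ∧
      a * u = y * s ∧ a * v = z * s ∧ Rewrites H y z
  · obtain ⟨r, hr, y, z, s, hs, hu, hv, hyz⟩ := hsurv
    obtain ⟨u₁, v₁, s₀, s₁, rfl, rfl, hs₁, hu₁, hv₁⟩ :=
      exists_common_suffix hu hv (by have := hlevel r hr; omega)
    exact .inl ⟨u₁, v₁, s₁, rfl, rfl, hs₁, hu₁ ▸ hv₁ ▸ hyz.mul_right s₀⟩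
  have hcross : ∀ r ∈ Set.Icc 1 (L - 1),
      ∃ pq ∈ H, RewritesAcross H (m + r * K') pq (a * u) (a * v) := by
    intro r hr
    have := hlevel r hr
    rcases huv.suffix_or_rewritesAcross (n := m + r * K') (by rw [length_mul]; omega) with
      hs | ⟨pq, hpq⟩
    · exact absurd ⟨r, hr, hs⟩ hsurv
    · exact ⟨pq, hpq.1, hpq⟩
  obtain ⟨i, hi, j, hj, hij, pq, hpi, hpj⟩ :=
    Set.exists_lt_and_of_ncard_lt hfin (by rw [Set.ncard_Icc_nat]; omega) hcross
  have hij' : i * K' + K' ≤ j * K' := by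
    have := Nat.mul_le_mul_right K' (hij : i + 1 ≤ j); linarith
  obtain ⟨x, x', t, rfl, hx', hx, hxx', hx't⟩ := exists_shorter_of_rewritesAcross hsym
    (hH _ hpi.1) hpi hpj (by omega) (by have := hlevel j hj; omega)
  exact .inr ⟨x, x', t, rfl, hx', by have := hlevel i hi; omega, hxx', hx't⟩

theorem annihilator_subset_rcGen (hsym : ∀ p ∈ H, (p.2, p.1) ∈ H) (hfin : H.Finite)
    (hH : ∀ p ∈ H, p.1.length < K') (ha : a.length < K') {L : ℕ} (hL : H.ncard + 2 ≤ L)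
    {B : ℕ} (hB : 2 * (K' * L) ≤ B) :
    annihilator (rcGen H) a ⊆
      rcGen {p | p.1.length + p.2.length ≤ B ∧ p ∈ annihilator (rcGen H) a} := by
  rw [rcGen_eq_rewrites hsym]
  set X := {p : FreeMonoid Ω × FreeMonoid Ω |
    p.1.length + p.2.length ≤ B ∧ p ∈ annihilator {p | Rewrites H p.1 p.2} a}
  have hX := isRightCong_rcGen X
  have hXmem {u v : FreeMonoid Ω} (huv : Rewrites H (a * u) (a * v))
      (hB : u.length + v.length ≤ B) : (u, v) ∈ rcGen X := subset_rcGen X ⟨hB, huv⟩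
  rintro ⟨u, v⟩ (huv : Rewrites H (a * u) (a * v))
  induction hn : u.length + v.length using Nat.strong_induction_on generalizing u v with
  | _ n ih =>
  by_cases huvB : u.length + v.length ≤ B
  · exact hXmem huv huvB
  wlog hvu : v.length ≤ u.length generalizing u v
  · exact hX.1.symm (this v u (huv.symm hsym) (by omega) (by omega) (by omega))
  rcases exists_common_suffix_or_shorter hsym hfin hH ha hL huv (by omega) with
    ⟨u₁, v₁, s, rfl, rfl, hs, hu₁v₁⟩ | ⟨x, x', t, rfl, hx', hx, hxx', hx't⟩
  · have hs₀ : s.length ≠ 0 := mt length_eq_zero.1 hs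
    simp only [length_mul] at hn
    exact hX.2 _ _ s (ih _ (by omega) u₁ v₁ hu₁v₁ rfl)
  · simp only [length_mul] at hn
    refine hX.1.trans (hX.2 _ _ t (hXmem hxx' (by omega))) ?_
    exact ih _ (by rw [length_mul]; omega) _ v hx't rfl

theorem subset_rcGen_inter_alphabet (hsym : ∀ p ∈ H, (p.2, p.1) ∈ H) {A : Set Ω}
    (ha : ∀ c ∈ a, c ∈ A) (hA : ∀ p ∈ H, (∀ c ∈ p.1, c ∈ A) ∧ ∀ c ∈ p.2, c ∈ A) (B : ℕ) :
    {p | p.1.length + p.2.length ≤ B ∧ p ∈ annihilator (rcGen H) a} ⊆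
      rcGen ({p | p.1.length + p.2.length ≤ B ∧ p ∈ annihilator (rcGen H) a} ∩
        {p | (∀ c ∈ p.1, c ∈ A) ∧ ∀ c ∈ p.2, c ∈ A}) := by
  rw [rcGen_eq_rewrites hsym]
  set Y := {p : FreeMonoid Ω × FreeMonoid Ω |
      p.1.length + p.2.length ≤ B ∧ p ∈ annihilator {p | Rewrites H p.1 p.2} a} ∩
    {p | (∀ c ∈ p.1, c ∈ A) ∧ ∀ c ∈ p.2, c ∈ A}
  have hY := isRightCong_rcGen Y
  rintro ⟨u, v⟩ ⟨huvB : u.length + v.length ≤ B, huv : Rewrites H (a * u) (a * v)⟩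
  induction hn : u.length + v.length using Nat.strong_induction_on generalizing u v with
  | _ n ih =>
  wlog hu : ∃ c ∈ u, c ∉ A generalizing u v
  · push Not at hu
    by_cases hv : ∀ c ∈ v, c ∈ A
    · exact subset_rcGen Y ⟨⟨huvB, huv⟩, hu, hv⟩
    push Not at hv
    exact hY.1.symm (this v u (by omega) (huv.symm hsym) (by omega) hv)
  obtain ⟨u₀, c, u₁, rfl, hu₀, hc⟩ := exists_first_notMem hu
  have hau₀ : ∀ x ∈ a * u₀, x ∈ A := fun x hx => (mem_mul.1 hx).elim (ha x) (hu₀ x)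
  obtain ⟨z, hz, -, hu₀z⟩ := huv.exists_of_eq_mul_of_notMem hA (mul_assoc ..).symm hau₀ hc
  obtain ⟨v₀, rfl, rfl⟩ := exists_of_mul_eq_mul_of_notMem hz fun hca => hc (ha c hca)
  simp only [length_mul, length_of] at huvB hn
  exact hY.2 _ _ _ (ih _ (by omega) u₀ v₀ (by omega) hu₀z rfl)

theorem exists_finite_rcGen_eq (hsym : ∀ p ∈ H, (p.2, p.1) ∈ H) (hfin : H.Finite) (B : ℕ) :
    ∃ Y : Set (FreeMonoid Ω × FreeMonoid Ω), Y.Finite ∧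
      rcGen Y = rcGen {p | p.1.length + p.2.length ≤ B ∧ p ∈ annihilator (rcGen H) a} := by
  classical
  set A : Set Ω := {c | c ∈ a} ∪ ⋃ p ∈ H, {c | c ∈ p.1 ∨ c ∈ p.2}
  have hAfin : A.Finite := by
    refine (a.symbols.finite_toSet.subset fun c hc => mem_symbols.2 hc).union
      (hfin.biUnion fun p _ => ?_)
    exact ((p.1.symbols ∪ p.2.symbols).finite_toSet.subset fun c hc => by simpa [mem_symbols])
  have hW := finite_setOf_length_le hAfin B
  have hX := subset_rcGen_inter_alphabet hsym (a := a) (A := A) (fun c hc => Or.inl hc)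
    (fun p hp => ⟨fun c hc => Or.inr (Set.mem_biUnion hp (Or.inl hc)),
      fun c hc => Or.inr (Set.mem_biUnion hp (Or.inr hc))⟩) B
  refine ⟨_, ?_, subset_antisymm (rcGen_subset_rcGen fun p hp => subset_rcGen _ hp.1)
    (rcGen_subset_rcGen hX)⟩
  exact (hW.prod hW).subset fun p ⟨⟨hpB, _⟩, hp₁, hp₂⟩ => ⟨⟨by omega, hp₁⟩, ⟨by omega, hp₂⟩⟩

end Annihilator

/-- Let `H ⊆ Ω* × Ω*` be finite and symmetric, `ρ = ⟨H⟩`, `a ∈ Ω*`, and set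
`K = max { |p| : (p,q) ∈ H }`, `K' = max(K, |a|) + 1`, `L = 2|H| + 2`,
`N = K'·L`.  Then the right annihilator congruence
`r(aρ) = {(u,v) : (au, av) ∈ ρ}` is generated, as a right congruence on `Ω*`,
by the set `X = {(u,v) : |u| + |v| ≤ 3N and (au, av) ∈ ρ}`.  In particular,
`r(aρ)` is a finitely generated right congruence. -/
theorem annihilator_finitely_generated (Ω : Type*)
    (H : Set (FreeMonoid Ω × FreeMonoid Ω)) (hfin : H.Finite)
    (hsym : ∀ p : FreeMonoid Ω × FreeMonoid Ω, p ∈ H → (p.2, p.1) ∈ H)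
    (a : FreeMonoid Ω) (K K' L N : ℕ)
    (hK : K = sSup ((fun p : FreeMonoid Ω × FreeMonoid Ω => p.1.length) '' H))
    (hK' : K' = max K a.length + 1)
    (hL : L = 2 * H.ncard + 2)
    (hN : N = K' * L) :
    rcGen {p : FreeMonoid Ω × FreeMonoid Ω |
        p.1.length + p.2.length ≤ 3 * N ∧ (a * p.1, a * p.2) ∈ rcGen H} =
      {p : FreeMonoid Ω × FreeMonoid Ω | (a * p.1, a * p.2) ∈ rcGen H} ∧
    ∃ Y : Set (FreeMonoid Ω × FreeMonoid Ω), Y.Finite ∧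
      rcGen Y = {p : FreeMonoid Ω × FreeMonoid Ω | (a * p.1, a * p.2) ∈ rcGen H} := by
  have hH : ∀ p ∈ H, p.1.length < K' := fun p hp => by
    have : p.1.length ≤ K := hK ▸ le_csSup (hfin.image _).bddAbove ⟨p, hp, rfl⟩
    omega
  have hgen : rcGen {p | p.1.length + p.2.length ≤ 3 * N ∧ p ∈ annihilator (rcGen H) a} =
      annihilator (rcGen H) a :=
    subset_antisymm
      (rcGen_subset (isRightCong_annihilator (isRightCong_rcGen H) a) fun p hp => hp.2)
      (annihilator_subset_rcGen hsym hfin hH (by omega) (L := L) (by omega) (by omega))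
  obtain ⟨Y, hY, hYgen⟩ := exists_finite_rcGen_eq hsym hfin (a := a) (3 * N)
  exact ⟨hgen, Y, hY, hYgen.trans hgen⟩
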